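/- arXiv:2407.08066 — 5 statements merged into one kernel-verified Lean document; each statement's English description precedes it below -/
import Mathlib

section
/- For all real z ≥ 0 and γ ≥ 2, one has z^γ/γ - 1/γ - (z-1) ≥ (1/2)(z-1)^2. -/
/-!
Write `z = 1 + t` and `w = z ^ (γ / 2)`. Bernoulli's inequality gives `w ≥ 1 + (γ / 2) t`, and
squaring it yields `z ^ γ = w ^ 2 ≥ 1 + γ t + (γ / 2) t ^ 2` because `(γ / 2) ^ 2 ≥ γ / 2`.
Dividing by `γ` is the claim.
-/

open Real

lemma one_add_two_mul_add_mul_sq_le_sq {a t w : ℝ} (ha : 1 ≤ a) (ht : -1 ≤ t)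
    (hw : 1 + a * t ≤ w) : 1 + 2 * a * t + a * t ^ 2 ≤ w ^ 2 := by
  rcases le_or_gt 0 (1 + a * t) with hpos | hneg
  · calc 1 + 2 * a * t + a * t ^ 2 ≤ (1 + a * t) ^ 2 := by
          nlinarith [mul_nonneg (mul_nonneg (sub_nonneg.mpr ha) (by linarith : (0 : ℝ) ≤ a))
            (sq_nonneg t)]
      _ ≤ w ^ 2 := pow_le_pow_left₀ hpos hw 2
  -- Here `a t < -1` and `2 + t ≥ 1`, so the left side `1 + a t (2 + t)` is negative.
  · nlinarith [sq_nonneg w, mul_nonpos_of_nonpos_of_nonneg hneg.le (by linarith : (0 : ℝ) ≤ 1 + t)]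

lemma one_add_mul_add_half_mul_sq_le_rpow_one_add {t p : ℝ} (ht : -1 ≤ t) (hp : 2 ≤ p) :
    1 + p * t + p / 2 * t ^ 2 ≤ (1 + t) ^ p := by
  have hbase : 0 ≤ 1 + t := by linarith
  have hsq : (1 + t) ^ p = ((1 + t) ^ (p / 2)) ^ 2 := by
    rw [← rpow_mul_natCast hbase]
    norm_num
  rw [hsq, show p * t = 2 * (p / 2) * t by ring]
  exact one_add_two_mul_add_mul_sq_le_sq (by linarith) ht
    (one_add_mul_self_le_rpow_one_add ht (by linarith))

theorem stmt0 (z γ : ℝ) (hz : 0 ≤ z) (hγ : 2 ≤ γ) :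
    z ^ γ / γ - 1 / γ - (z - 1) ≥ (1 / 2) * (z - 1) ^ 2 := by
  have hbernoulli := one_add_mul_add_half_mul_sq_le_rpow_one_add (by linarith : -1 ≤ z - 1) hγ
  rw [add_sub_cancel] at hbernoulli
  have hγ₀ : 0 < γ := by linarith
  rw [ge_iff_le, ← sub_nonneg]
  have hdiv : z ^ γ / γ - 1 / γ - (z - 1) - 1 / 2 * (z - 1) ^ 2
      = (z ^ γ - (1 + γ * (z - 1) + γ / 2 * (z - 1) ^ 2)) / γ := by
    field_simp
    ring
  rw [hdiv]
  exact div_nonneg (sub_nonneg.mpr hbernoulli) hγ₀.le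
end

section
/- For all real z ≥ 1, γ ≥ 2, and 0 < c < 1/γ, one has z^γ/γ - 1/γ - (z-1) ≥ c(z-1)^2 z^{γ-2}. -/
/-!
The right-hand side increases with `c`, so it suffices to take `c = 1 / γ`. Then
`G z = z ^ γ - 1 - γ (z - 1) - (z - 1) ^ 2 z ^ (γ - 2)` vanishes at `z = 1`, and with
`p = z ^ (γ - 3)` its derivative is `(γ - 2) p (z - 1) + γ (p z - 1) ≥ 0` for `z ≥ 1`.
-/

open Set

section

variable {γ : ℝ}

theorem hasDerivAt_rpow_sub_mul_sub_sq_mul_rpow {x : ℝ} (hx : 0 < x) :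
    HasDerivAt (fun y : ℝ => y ^ γ - γ * y - (y - 1) ^ 2 * y ^ (γ - 2))
      (γ * x ^ (γ - 1) - γ - (2 * (x - 1) * x ^ (γ - 2)
        + (x - 1) ^ 2 * ((γ - 2) * x ^ (γ - 2 - 1)))) x := by
  have hpow (p : ℝ) : HasDerivAt (fun y : ℝ => y ^ p) (p * x ^ (p - 1)) x :=
    Real.hasDerivAt_rpow_const (Or.inl hx.ne')
  have hsq : HasDerivAt (fun y : ℝ => (y - 1) ^ 2) (2 * (x - 1)) x := by
    simpa using ((hasDerivAt_id' x).sub_const 1).fun_pow 2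
  simpa using ((hpow γ).fun_sub ((hasDerivAt_id' x).const_mul γ)).fun_sub
    (hsq.fun_mul (hpow (γ - 2)))

theorem monotoneOn_rpow_sub_mul_sub_sq_mul_rpow (hγ : 2 ≤ γ) :
    MonotoneOn (fun y : ℝ => y ^ γ - γ * y - (y - 1) ^ 2 * y ^ (γ - 2)) (Ici 1) := by
  have hderiv (x : ℝ) (hx : 1 ≤ x) := hasDerivAt_rpow_sub_mul_sub_sq_mul_rpow (γ := γ)
    (zero_lt_one.trans_le hx)
  refine monotoneOn_of_hasDerivWithinAt_nonneg (convex_Ici 1)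
    (fun x hx => (hderiv x hx).continuousAt.continuousWithinAt)
    (fun x hx => (hderiv x (interior_subset hx)).hasDerivWithinAt) fun x hx => ?_
  rw [interior_Ici] at hx
  have hx1 : 1 < x := hx
  have hx0 : 0 < x := zero_lt_one.trans hx1
  set p := x ^ (γ - 2 - 1)
  have hp : 0 < p := Real.rpow_pos_of_pos hx0 _
  have hpx : x ^ (γ - 2) = p * x := by
    rw [← Real.rpow_add_one hx0.ne']; ring_nf
  have hpxx : x ^ (γ - 1) = p * x * x := by
    rw [← Real.rpow_add_one hx0.ne', ← Real.rpow_add_one hx0.ne']; ring_nf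
  have hpx_one : 1 ≤ p * x := hpx ▸ Real.one_le_rpow hx1.le (by linarith)
  rw [hpx, hpxx]
  have hsum : γ * (p * x * x) - γ - (2 * (x - 1) * (p * x) + (x - 1) ^ 2 * ((γ - 2) * p))
      = (γ - 2) * p * (x - 1) + γ * (p * x - 1) := by ring
  rw [hsum]
  exact add_nonneg (mul_nonneg (mul_nonneg (sub_nonneg.2 hγ) hp.le) (sub_nonneg.2 hx1.le))
    (mul_nonneg (by linarith) (sub_nonneg.2 hpx_one))

theorem sub_one_sq_mul_rpow_le_rpow_sub_one_sub_mul {z : ℝ} (hz : 1 ≤ z) (hγ : 2 ≤ γ) :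
    (z - 1) ^ 2 * z ^ (γ - 2) ≤ z ^ γ - 1 - γ * (z - 1) := by
  have := monotoneOn_rpow_sub_mul_sub_sq_mul_rpow hγ self_mem_Ici hz hz
  simp only [Real.one_rpow, sub_self, ne_eq, OfNat.ofNat_ne_zero, not_false_eq_true,
    zero_pow, mul_one, sub_zero] at this
  linarith

end

theorem stmt1_general (z γ c : ℝ) (hz : 1 ≤ z) (hγ : 2 ≤ γ) (hcγ : c < 1 / γ) :
    z ^ γ / γ - 1 / γ - (z - 1) ≥ c * (z - 1) ^ 2 * z ^ (γ - 2) := by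
  have hγ0 : 0 < γ := by linarith
  have hX : 0 ≤ (z - 1) ^ 2 * z ^ (γ - 2) :=
    mul_nonneg (sq_nonneg _) (Real.rpow_nonneg (zero_le_one.trans hz) _)
  calc c * (z - 1) ^ 2 * z ^ (γ - 2)
      ≤ 1 / γ * ((z - 1) ^ 2 * z ^ (γ - 2)) := by
        rw [mul_assoc]; exact mul_le_mul_of_nonneg_right hcγ.le hX
    _ ≤ 1 / γ * (z ^ γ - 1 - γ * (z - 1)) := by
        gcongr; exact sub_one_sq_mul_rpow_le_rpow_sub_one_sub_mul hz hγ
    _ = z ^ γ / γ - 1 / γ - (z - 1) := by field_simp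

theorem stmt1 (z γ c : ℝ) (hz : 1 ≤ z) (hγ : 2 ≤ γ) (hc : 0 < c) (hcγ : c < 1 / γ) :
    z ^ γ / γ - 1 / γ - (z - 1) ≥ c * (z - 1) ^ 2 * z ^ (γ - 2) :=
  stmt1_general z γ c hz hγ hcγ
end

section
/- Let γ ≥ 2 and define Θ(x,y) = V(x) - V(y) - V'(y)(x - y) where V(x) = x^γ/γ and V'(x) = x^{γ-1}. Then there exists a constant c > 0 (depending only on γ) such that for all x ≥ 0, y ≥ 0, Θ(x,y) ≥ c (x-y)^2 (x^{γ-2} + y^{γ-2}). -/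
/-! With `u s = y + s * (x - y)`, Taylor's formula with integral remainder gives
`Θ(x, y) = (γ - 1) (x - y)² ∫₀¹ (1 - s) (u s)^(γ-2) ds`. For `x, y ≥ 0` we have `u s ≥ s x` and
`u s ≥ (1 - s) y`, and the beta integrals `∫₀¹ (1 - s) s^(γ-2) = 1 / ((γ - 1) γ)` and
`∫₀¹ (1 - s)^(γ-1) = 1 / γ` bound the integral below by both `x^(γ-2) / ((γ - 1) γ)` and
`y^(γ-2) / γ`. Since `γ - 1 ≥ 1`, averaging the two bounds gives the claim with `c = 1 / (2γ)`. -/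

open intervalIntegral

theorem taylor_remainder_one_eq_integral {f f' f'' : ℝ → ℝ} (hf : ∀ t, HasDerivAt f (f' t) t)
    (hf' : ∀ t, HasDerivAt f' (f'' t) t) (hf'' : Continuous f'') (x y : ℝ) :
    f x - f y - f' y * (x - y) =
      (x - y) ^ 2 * ∫ s in (0:ℝ)..1, (1 - s) * f'' (y + s * (x - y)) := by
  set u : ℝ → ℝ := fun s => y + s * (x - y)
  have hu : ∀ s, HasDerivAt u (x - y) s := fun s => by
    simpa only [one_mul] using ((hasDerivAt_id' s).mul_const (x - y)).const_add y
  have hF : ∀ s, HasDerivAt (fun s => (1 - s) * (x - y) * f' (u s) + f (u s))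
      ((x - y) ^ 2 * ((1 - s) * f'' (u s))) s := fun s => by
    refine ((((hasDerivAt_id' s).const_sub 1).mul_const (x - y)).fun_mul
      ((hf' (u s)).comp s (hu s))).fun_add ((hf (u s)).comp s (hu s)) |>.congr_deriv ?_
    simp only [Function.comp_apply]
    ring
  rw [← integral_const_mul, integral_eq_sub_of_hasDerivAt (fun s _ => hF s)
    (Continuous.intervalIntegrable (by fun_prop) _ _)]
  simp only [u, one_mul, zero_mul, add_sub_cancel, add_zero]
  ring

section

variable {p x y : ℝ}

theorem integral_self_mul_rpow (hp : -1 < p) : ∫ s in (0:ℝ)..1, s * s ^ p = 1 / (p + 2) := by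
  have h : Set.EqOn (fun s : ℝ => s * s ^ p) (fun s => s ^ (p + 1)) (Set.uIcc 0 1) := fun s hs => by
    rw [Set.uIcc_of_le zero_le_one] at hs
    simp only [Real.rpow_add_one' hs.1 (by linarith), mul_comm]
  rw [integral_congr h, integral_rpow (Or.inl (by linarith)), Real.one_rpow,
    Real.zero_rpow (by linarith)]
  ring_nf

theorem integral_one_sub_mul_rpow (hp : -1 < p) :
    ∫ s in (0:ℝ)..1, (1 - s) * s ^ p = 1 / ((p + 1) * (p + 2)) := by
  have h1 : p + 1 ≠ 0 := by linarith
  have h2 : p + 2 ≠ 0 := by linarith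
  simp only [sub_mul, one_mul]
  rw [integral_sub (intervalIntegrable_rpow' hp)
      ((intervalIntegrable_rpow' hp).continuousOn_mul (g := fun s => s) continuousOn_id),
    integral_rpow (Or.inl hp), integral_self_mul_rpow hp, Real.one_rpow,
    Real.zero_rpow (by linarith)]
  field_simp
  ring

theorem integral_one_sub_mul_one_sub_rpow (hp : -1 < p) :
    ∫ s in (0:ℝ)..1, (1 - s) * (1 - s) ^ p = 1 / (p + 2) := by
  rw [integral_comp_sub_left (fun s => s * s ^ p), sub_zero, sub_self, integral_self_mul_rpow hp]

theorem continuous_one_sub_mul_rpow_segment (hp : 0 ≤ p) :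
    Continuous fun s : ℝ => (1 - s) * (y + s * (x - y)) ^ p := by
  fun_prop (disch := exact fun _ => Or.inr hp)

theorem rpow_div_le_integral_segment_left (hp : 0 ≤ p) (hx : 0 ≤ x) (hy : 0 ≤ y) :
    x ^ p / ((p + 1) * (p + 2)) ≤ ∫ s in (0:ℝ)..1, (1 - s) * (y + s * (x - y)) ^ p := by
  have hs : Continuous fun s : ℝ => (1 - s) * s ^ p := by
    fun_prop (disch := exact fun _ => Or.inr hp)
  rw [div_eq_mul_one_div, mul_comm, ← integral_one_sub_mul_rpow (by linarith),
    ← integral_mul_const]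
  refine integral_mono_on zero_le_one ((hs.mul continuous_const).intervalIntegrable _ _)
    ((continuous_one_sub_mul_rpow_segment hp).intervalIntegrable _ _) fun s ⟨hs0, hs1⟩ => ?_
  rw [mul_assoc, ← Real.mul_rpow hs0 hx]
  gcongr
  nlinarith

theorem rpow_div_le_integral_segment_right (hp : 0 ≤ p) (hx : 0 ≤ x) (hy : 0 ≤ y) :
    y ^ p / (p + 2) ≤ ∫ s in (0:ℝ)..1, (1 - s) * (y + s * (x - y)) ^ p := by
  have hs : Continuous fun s : ℝ => (1 - s) * (1 - s) ^ p := by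
    fun_prop (disch := exact fun _ => Or.inr hp)
  rw [div_eq_mul_one_div, mul_comm, ← integral_one_sub_mul_one_sub_rpow (by linarith),
    ← integral_mul_const]
  refine integral_mono_on zero_le_one ((hs.mul continuous_const).intervalIntegrable _ _)
    ((continuous_one_sub_mul_rpow_segment hp).intervalIntegrable _ _) fun s ⟨hs0, hs1⟩ => ?_
  rw [mul_assoc, ← Real.mul_rpow (by linarith) hy]
  gcongr
  nlinarith

end

theorem rpow_div_sub_rpow_div_sub_mul_eq_integral {γ : ℝ} (hγ : 2 ≤ γ) (x y : ℝ) :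
    x ^ γ / γ - y ^ γ / γ - y ^ (γ - 1) * (x - y) =
      (γ - 1) * (x - y) ^ 2 * ∫ s in (0:ℝ)..1, (1 - s) * (y + s * (x - y)) ^ (γ - 2) := by
  have hV : ∀ t : ℝ, HasDerivAt (fun t => t ^ γ / γ) (t ^ (γ - 1)) t := fun t =>
    ((Real.hasDerivAt_rpow_const (Or.inr (by linarith))).div_const γ).congr_deriv
      (mul_div_cancel_left₀ _ (by linarith))
  have hV' : ∀ t : ℝ, HasDerivAt (fun t => t ^ (γ - 1)) ((γ - 1) * t ^ (γ - 2)) t := fun t => by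
    simpa only [sub_sub, one_add_one_eq_two] using
      Real.hasDerivAt_rpow_const (x := t) (Or.inr (by linarith : 1 ≤ γ - 1))
  rw [taylor_remainder_one_eq_integral hV hV'
    (continuous_const.mul (Real.continuous_rpow_const (by linarith)))]
  simp only [mul_left_comm (1 - _) (γ - 1), integral_const_mul]
  ring

theorem stmt2 (γ : ℝ) (hγ : 2 ≤ γ) :
    ∃ c : ℝ, 0 < c ∧ ∀ x y : ℝ, 0 ≤ x → 0 ≤ y →
      x ^ γ / γ - y ^ γ / γ - y ^ (γ - 1) * (x - y) ≥
        c * (x - y) ^ 2 * (x ^ (γ - 2) + y ^ (γ - 2)) := by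
  refine ⟨1 / (2 * γ), by positivity, fun x y hx hy => ?_⟩
  set I := ∫ s in (0:ℝ)..1, (1 - s) * (y + s * (x - y)) ^ (γ - 2)
  have hp : 0 ≤ γ - 2 := by linarith
  have hxI : x ^ (γ - 2) ≤ (γ - 1) * γ * I := by
    have := rpow_div_le_integral_segment_left hp hx hy
    rwa [show γ - 2 + 1 = γ - 1 by ring, show γ - 2 + 2 = γ by ring,
      div_le_iff₀ (by nlinarith), mul_comm] at this
  have hyI : y ^ (γ - 2) ≤ γ * I := by
    have := rpow_div_le_integral_segment_right hp hx hy
    rwa [show γ - 2 + 2 = γ by ring, div_le_iff₀ (by linarith), mul_comm] at this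
  have hI : 0 ≤ I := by nlinarith [Real.rpow_nonneg hy (γ - 2)]
  have hsum : x ^ (γ - 2) + y ^ (γ - 2) ≤ 2 * γ * ((γ - 1) * I) := by
    nlinarith [mul_nonneg hp (mul_nonneg (by linarith : (0:ℝ) ≤ γ) hI)]
  rw [ge_iff_le, rpow_div_sub_rpow_div_sub_mul_eq_integral hγ]
  calc 1 / (2 * γ) * (x - y) ^ 2 * (x ^ (γ - 2) + y ^ (γ - 2))
      ≤ 1 / (2 * γ) * (x - y) ^ 2 * (2 * γ * ((γ - 1) * I)) := by gcongr
    _ = (γ - 1) * (x - y) ^ 2 * I := by field_simp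
end

section
/- Let ξ ∈ ℂ^4, U ∈ ℝ^4 with U^0 > ν, -U^α U_α > ν for some ν > 0 and |U| bounded, let Θ ≥ 0, and define h_{αβ} = (1/2)(ξ_α ξ̄_β + ξ̄_α ξ_β) − (1/2) g_{αβ} ξ_γ ξ̄^γ − g_{αβ} Θ with g = diag(-1,1,1,1). Then there exist constants c₂(ν) > 0 and c₃ > 0 (depending on ν and the bound on U) such that c₂ h_{00} ≤ h_{0β} U^β ≤ c₃ h_{00}, where h_{00} = (1/2)Σ_α |ξ_α|² + Θ. -/
open scoped BigOperators

/-- Partial derivative `∂_i f` on `ℝ^{1+3}` (index `0` is time). -/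
noncomputable def pd (i : Fin 4) (f : (Fin 4 → ℝ) → ℝ) (x : Fin 4 → ℝ) : ℝ :=
  fderiv ℝ f x (Pi.single i 1)

/-- Partial derivative `∂_i f` for complex-valued `f`. -/
noncomputable def pdC (i : Fin 4) (f : (Fin 4 → ℝ) → ℂ) (x : Fin 4 → ℝ) : ℂ :=
  fderiv ℝ f x (Pi.single i 1)

/-- Diagonal entries of the Minkowski metric `diag(-1,1,1,1)`. -/
def mink (i : Fin 4) : ℝ := if i = 0 then -1 else 1

/-- The wave operator `□ = -∂_t² + Δ`. -/
noncomputable def box (f : (Fin 4 → ℝ) → ℝ) (x : Fin 4 → ℝ) : ℝ :=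
  ∑ i : Fin 4, mink i * pd i (pd i f) x

/-- The wave operator on complex-valued functions. -/
noncomputable def boxC (f : (Fin 4 → ℝ) → ℂ) (x : Fin 4 → ℝ) : ℂ :=
  ∑ i : Fin 4, (mink i : ℂ) * pdC i (pdC i f) x

/-!
In the rest frame, `h₀₀ = ½|ξ|² + Θ` and `h₀ᵢ = Re(ξ₀ ξ̄ᵢ)`, so the flux is `h₀₀ U⁰` plus a cross
term which Cauchy–Schwarz and AM–GM bound by `h₀₀ |U_sp|`. Hence the flux lies between
`h₀₀ (U⁰ - |U_sp|)` and `h₀₀ (U⁰ + |U_sp|)`. Since `(U⁰)² - |U_sp|² = -U^α U_α > ν`, the vector is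
timelike and `U⁰ - |U_sp| ≥ ν / (2 U⁰)`, while `U⁰ + |U_sp| ≤ 2 U⁰`. As `U⁰ ≤ max M ν`, the constants
`c₂ = ν / (2 max M ν)` and `c₃ = 2 max M ν` work.
-/

open Finset ComplexConjugate

noncomputable def modulatedEnergy (ξ : Fin 4 → ℂ) (Θ : ℝ) (α β : Fin 4) : ℝ :=
  (1 / 2) * (ξ α * (starRingEnd ℂ) (ξ β) + (starRingEnd ℂ) (ξ α) * ξ β).re
    - (1 / 2) * (if α = β then mink α else 0) *
        (∑ δ : Fin 4, mink δ * (ξ δ * (starRingEnd ℂ) (ξ δ)).re)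
    - (if α = β then mink α else 0) * Θ

lemma re_mul_conj_self (z : ℂ) : (z * conj z).re = ‖z‖ ^ 2 := by
  rw [Complex.mul_conj']
  norm_cast

lemma modulatedEnergy_zero_zero (ξ : Fin 4 → ℂ) (Θ : ℝ) :
    modulatedEnergy ξ Θ 0 0 = (1 / 2) * ∑ α, ‖ξ α‖ ^ 2 + Θ := by
  simp only [modulatedEnergy, Fin.sum_univ_four, mul_comm (conj (ξ 0)), Complex.add_re,
    re_mul_conj_self, mink, Fin.isValue, Fin.reduceEq, ↓reduceIte]
  ring

lemma modulatedEnergy_zero_succ (ξ : Fin 4 → ℂ) (Θ : ℝ) (i : Fin 3) :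
    modulatedEnergy ξ Θ 0 i.succ = (ξ 0 * conj (ξ i.succ)).re := by
  simp only [modulatedEnergy, if_neg (Fin.succ_ne_zero i).symm, Complex.add_re, Complex.mul_re,
    Complex.conj_re, Complex.conj_im]
  ring

lemma sum_modulatedEnergy_zero_mul (ξ : Fin 4 → ℂ) (Θ : ℝ) (U : Fin 4 → ℝ) :
    ∑ β, modulatedEnergy ξ Θ 0 β * U β =
      modulatedEnergy ξ Θ 0 0 * U 0 + ∑ i : Fin 3, (ξ 0 * conj (ξ i.succ)).re * U i.succ := by
  rw [Fin.sum_univ_succ]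
  simp only [modulatedEnergy_zero_succ]

lemma neg_sum_mink_mul_mul (U : Fin 4 → ℝ) :
    -(∑ α, mink α * U α * U α) = U 0 ^ 2 - ∑ i : Fin 3, U i.succ ^ 2 := by
  simp only [Fin.sum_univ_four, Fin.sum_univ_three, mink, Fin.isValue, Fin.reduceEq, ↓reduceIte,
    Fin.succ_zero_eq_one, Fin.succ_one_eq_two, Fin.reduceSucc]
  ring

lemma abs_sum_re_mul_conj_mul_le {ι : Type*} (s : Finset ι) (a : ℂ) (z : ι → ℂ) (u : ι → ℝ) :
    |∑ i ∈ s, (a * conj (z i)).re * u i| ≤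
      ‖a‖ * √(∑ i ∈ s, ‖z i‖ ^ 2) * √(∑ i ∈ s, u i ^ 2) :=
  calc |∑ i ∈ s, (a * conj (z i)).re * u i|
      ≤ ∑ i ∈ s, |(a * conj (z i)).re * u i| := abs_sum_le_sum_abs _ _
    _ ≤ ∑ i ∈ s, ‖a‖ * (‖z i‖ * |u i|) := by
        gcongr with i
        rw [abs_mul, ← mul_assoc]
        gcongr
        simpa using Complex.abs_re_le_norm (a * conj (z i))
    _ = ‖a‖ * ∑ i ∈ s, ‖z i‖ * |u i| := (mul_sum _ _ _).symm
    _ ≤ ‖a‖ * (√(∑ i ∈ s, ‖z i‖ ^ 2) * √(∑ i ∈ s, |u i| ^ 2)) := by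
        gcongr
        exact Real.sum_mul_le_sqrt_mul_sqrt _ _ _
    _ = ‖a‖ * √(∑ i ∈ s, ‖z i‖ ^ 2) * √(∑ i ∈ s, u i ^ 2) := by
        simp only [sq_abs, mul_assoc]

lemma abs_flux_cross_le (ξ : Fin 4 → ℂ) {Θ : ℝ} (hΘ : 0 ≤ Θ) (U : Fin 4 → ℝ) :
    |∑ i : Fin 3, (ξ 0 * conj (ξ i.succ)).re * U i.succ| ≤
      modulatedEnergy ξ Θ 0 0 * √(∑ i : Fin 3, U i.succ ^ 2) := by
  set σ := ∑ i : Fin 3, ‖ξ i.succ‖ ^ 2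
  have hamgm : ‖ξ 0‖ * √σ ≤ modulatedEnergy ξ Θ 0 0 := by
    have := two_mul_le_add_sq ‖ξ 0‖ √σ
    rw [Real.sq_sqrt (by positivity)] at this
    rw [modulatedEnergy_zero_zero, Fin.sum_univ_succ]
    linarith
  calc _ ≤ ‖ξ 0‖ * √σ * √(∑ i : Fin 3, U i.succ ^ 2) := abs_sum_re_mul_conj_mul_le _ _ _ _
    _ ≤ _ := by gcongr

lemma div_two_mul_le_sub_sqrt {t r : ℝ} (ht : 0 < t) (hr : 0 ≤ r) (hrt : r ≤ t ^ 2) :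
    (t ^ 2 - r) / (2 * t) ≤ t - √r := by
  have hs : √r ≤ t := (Real.sqrt_le_left ht.le).2 hrt
  rw [div_le_iff₀ (by positivity)]
  nlinarith [Real.sq_sqrt hr, Real.sqrt_nonneg r]

/-- Pointwise coercivity of the modulated energy flux `η(U) = h_{0β} U^β` in the frame of a
uniformly timelike, future-directed, bounded vector `U`. -/
theorem stmt18 (ν M : ℝ) (hν : 0 < ν) :
    ∃ c₂ c₃ : ℝ, 0 < c₂ ∧ 0 < c₃ ∧
      ∀ (ξ : Fin 4 → ℂ) (U : Fin 4 → ℝ) (Θ : ℝ), 0 ≤ Θ →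
        ν < U 0 → ν < -(∑ α : Fin 4, mink α * U α * U α) → (∀ α, |U α| ≤ M) →
        ∀ h : Fin 4 → Fin 4 → ℝ,
          (h = fun α β =>
            (1 / 2) * (ξ α * (starRingEnd ℂ) (ξ β) + (starRingEnd ℂ) (ξ α) * ξ β).re
            - (1 / 2) * (if α = β then mink α else 0) *
                (∑ δ : Fin 4, mink δ * (ξ δ * (starRingEnd ℂ) (ξ δ)).re)
            - (if α = β then mink α else 0) * Θ) →
          h 0 0 = (1 / 2) * (∑ α : Fin 4, ‖ξ α‖ ^ 2) + Θ ∧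
          c₂ * h 0 0 ≤ ∑ β : Fin 4, h 0 β * U β ∧
          (∑ β : Fin 4, h 0 β * U β) ≤ c₃ * h 0 0 := by
  set M' := max M ν
  have hM' : 0 < M' := hν.trans_le (le_max_right _ _)
  refine ⟨ν / (2 * M'), 2 * M', by positivity, by positivity, ?_⟩
  intro ξ U Θ hΘ hU0 hUU hUM h hh
  obtain rfl : h = modulatedEnergy ξ Θ := hh
  have hE : 0 ≤ modulatedEnergy ξ Θ 0 0 := by rw [modulatedEnergy_zero_zero]; positivity
  set r := ∑ i : Fin 3, U i.succ ^ 2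
  have hUM' : U 0 ≤ M' := ((le_abs_self _).trans (hUM 0)).trans (le_max_left _ _)
  have hr : 0 ≤ r := by positivity
  rw [neg_sum_mink_mul_mul] at hUU
  have hrU : r ≤ U 0 ^ 2 := by linarith
  have hcross := abs_le.1 (abs_flux_cross_le ξ hΘ U)
  refine ⟨modulatedEnergy_zero_zero ξ Θ, ?_, ?_⟩
  · have hgap : ν / (2 * M') ≤ U 0 - √r :=
      calc ν / (2 * M') ≤ ν / (2 * U 0) := by gcongr; linarith
        _ ≤ (U 0 ^ 2 - r) / (2 * U 0) := by gcongr; linarith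
        _ ≤ U 0 - √r := div_two_mul_le_sub_sqrt (by linarith) hr hrU
    rw [sum_modulatedEnergy_zero_mul]
    linarith [mul_le_mul_of_nonneg_left hgap hE]
  · have hsum : U 0 + √r ≤ 2 * M' := by
      linarith [(Real.sqrt_le_left (by linarith)).2 hrU]
    rw [sum_modulatedEnergy_zero_mul]
    linarith [mul_le_mul_of_nonneg_left hsum hE]
end

section
/- Let γ ≥ 2, c > 0, and let (U, ρ) be a solution of the REP system U^α ∂_α U_β + ∂_β V'(ρ)/1 = 0, U^α ∂_α ρ + ρ ∂_α U^α = 0 with V'(ρ) = ρ^{γ-1}, normalized by U^α U_α = -c² - 2V'(ρ) (with metric diag(-c²,1,1,1)). Define Γ = (1 + 2V'(ρ)/c²)^{-1/2}, u = Γ U, μ = ρ + (γ+1)V(ρ)/c², p = (γ-1)V(ρ) where V(ρ) = ρ^γ/γ. Then (u, μ, p) satisfies the relativistic Euler equations: u^α ∂_α u^β + (g^{αβ} + u^α u^β/c²) ∂_α p/(μ + p/c²) = 0, u^α ∂_α μ + (∂_α u^α)(μ + p/c²) = 0, and u^α u_α = -c². Moreover Uρ = u(μ + p/c²)Γ and ρ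 = (μ + p/c²)Γ². -/
open scoped BigOperators

/-- Diagonal entries of the Minkowski metric `diag(-c²,1,1,1)` with speed of light `c`. -/
noncomputable def minkc (c : ℝ) (i : Fin 4) : ℝ := if i = 0 then -c ^ 2 else 1

/-- Diagonal entries of the inverse metric `diag(-1/c²,1,1,1)`. -/
noncomputable def minkcInv (c : ℝ) (i : Fin 4) : ℝ := if i = 0 then -1 / c ^ 2 else 1

set_option maxHeartbeats 1000000 in
/-- Equivalence of the relativistic Euler with potential (REP) system and the standard
relativistic Euler equations with pressure, via the rescaling `u = Γ U`,
`μ = ρ + (γ+1)V(ρ)/c²`, `p = (γ-1)V(ρ)`, `Γ = (1 + 2V'(ρ)/c²)^{-1/2}`. -/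
theorem stmt19 (γ c : ℝ) (hγ : 2 ≤ γ) (hc : 0 < c)
    (U : Fin 4 → (Fin 4 → ℝ) → ℝ) (ρ : (Fin 4 → ℝ) → ℝ)
    (hU : ∀ α, ContDiff ℝ (⊤ : ℕ∞) (U α)) (hρ : ContDiff ℝ (⊤ : ℕ∞) ρ) (hρ0 : ∀ x, 0 ≤ ρ x)
    (hmom : ∀ (β : Fin 4) x, (∑ α : Fin 4, U α x * pd α (fun y => minkc c β * U β y) x)
      + pd β (fun y => ρ y ^ (γ - 1)) x = 0)
    (hcont : ∀ x, (∑ α : Fin 4, U α x * pd α ρ x) + ρ x * ∑ α : Fin 4, pd α (U α) x = 0)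
    (hnorm : ∀ x, ∑ α : Fin 4, minkc c α * U α x * U α x = -c ^ 2 - 2 * ρ x ^ (γ - 1))
    (Γ : (Fin 4 → ℝ) → ℝ) (hΓ : Γ = fun x => 1 / Real.sqrt (1 + 2 * ρ x ^ (γ - 1) / c ^ 2))
    (u : Fin 4 → (Fin 4 → ℝ) → ℝ) (hu : u = fun α x => Γ x * U α x)
    (μ : (Fin 4 → ℝ) → ℝ) (hμ : μ = fun x => ρ x + (γ + 1) * (ρ x ^ γ / γ) / c ^ 2)
    (p : (Fin 4 → ℝ) → ℝ) (hp : p = fun x => (γ - 1) * (ρ x ^ γ / γ)) :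
    (∀ (β : Fin 4) x, (∑ α : Fin 4, u α x * pd α (u β) x)
      + (∑ α : Fin 4, ((if α = β then minkcInv c α else 0) + u α x * u β x / c ^ 2)
          * pd α p x) / (μ x + p x / c ^ 2) = 0) ∧
    (∀ x, (∑ α : Fin 4, u α x * pd α μ x)
      + (∑ α : Fin 4, pd α (u α) x) * (μ x + p x / c ^ 2) = 0) ∧
    (∀ x, ∑ α : Fin 4, minkc c α * u α x * u α x = -c ^ 2) ∧
    (∀ (α : Fin 4) x, U α x * ρ x = u α x * (μ x + p x / c ^ 2) * Γ x) ∧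
    (∀ x, ρ x = (μ x + p x / c ^ 2) * Γ x ^ 2) := by
  have hγ0 : (0:ℝ) < γ := by linarith
  have hc2 : (0:ℝ) < c ^ 2 := by positivity
  have hρd : Differentiable ℝ ρ := hρ.differentiable (by simp)
  have hUd : ∀ α, Differentiable ℝ (U α) := fun α => (hU α).differentiable (by simp)
  have hs0 : ∀ x, 0 ≤ ρ x ^ (γ - 1) := fun x => Real.rpow_nonneg (hρ0 x) _
  have hw : ∀ x, 0 < 1 + 2 * ρ x ^ (γ - 1) / c ^ 2 := fun x => by have := hs0 x; positivity
  have hsq : ∀ x, 0 < Real.sqrt (1 + 2 * ρ x ^ (γ - 1) / c ^ 2) := fun x => Real.sqrt_pos.2 (hw x)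
  have hG2 : ∀ x, Γ x ^ 2 * (1 + 2 * ρ x ^ (γ - 1) / c ^ 2) = 1 := by
    intro x
    rw [hΓ]
    simp only [div_pow, one_pow, Real.sq_sqrt (hw x).le]
    rw [one_div, inv_mul_cancel₀ (hw x).ne']
  have hG2' : ∀ x, Γ x ^ 2 * (c ^ 2 + 2 * ρ x ^ (γ - 1)) = c ^ 2 := by
    intro x
    have h := hG2 x
    field_simp at h
    linear_combination h
  -- splitting of powers
  have hsplit : ∀ (a : ℝ), 1 ≤ a → ∀ x, ρ x ^ a = ρ x * ρ x ^ (a - 1) := by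
    intro a ha x
    rcases eq_or_lt_of_le (hρ0 x) with h | h
    · rw [← h, Real.zero_rpow (by linarith : a ≠ 0), zero_mul]
    · nth_rewrite 1 [show a = 1 + (a - 1) by ring]
      rw [Real.rpow_add h, Real.rpow_one]
  have hrT : ∀ x, ρ x ^ (γ - 1) = ρ x * ρ x ^ (γ - 1 - 1) := fun x => hsplit _ (by linarith) x
  have hrS : ∀ x, ρ x ^ γ = ρ x * ρ x ^ (γ - 1) := fun x => hsplit γ (by linarith) x
  -- derivative of ρ^(γ-1)
  have hSd : ∀ x, HasFDerivAt (fun y => ρ y ^ (γ - 1))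
      (((γ - 1) * ρ x ^ (γ - 1 - 1)) • fderiv ℝ ρ x) x := fun x =>
    (Real.hasDerivAt_rpow_const (Or.inr (by linarith))).comp_hasFDerivAt x (hρd x).hasFDerivAt
  have pdρS : ∀ (α : Fin 4) x, pd α (fun y => ρ y ^ (γ - 1)) x
      = (γ - 1) * ρ x ^ (γ - 1 - 1) * pd α ρ x := by
    intro α x
    simp only [pd, (hSd x).fderiv, ContinuousLinearMap.smul_apply, smul_eq_mul]
  -- derivative of Γ
  have hΓD : ∀ x, HasFDerivAt Γ
      ((-((1/(2*Real.sqrt (1 + 2 * ρ x ^ (γ-1) / c^2)))*(2/c^2)) / (Real.sqrt (1 + 2 * ρ x ^ (γ-1) / c^2))^2)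
        • (((γ - 1) * ρ x ^ (γ - 1 - 1)) • fderiv ℝ ρ x)) x := by
    intro x
    have h1 : HasDerivAt (fun t : ℝ => 1 + 2 * t / c ^ 2) (2/c^2) (ρ x ^ (γ-1)) := by
      simpa using (((hasDerivAt_id (ρ x ^ (γ-1))).const_mul 2).div_const (c^2)).const_add 1
    have h2 := HasDerivAt.comp (ρ x ^ (γ-1)) (Real.hasDerivAt_sqrt (hw x).ne') h1
    have h3 := (hasDerivAt_inv (hsq x).ne').comp (ρ x ^ (γ-1)) h2
    have φd : HasDerivAt (fun t : ℝ => 1 / Real.sqrt (1 + 2 * t / c ^ 2))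
        (-((1/(2*Real.sqrt (1 + 2 * ρ x ^ (γ-1) / c^2)))*(2/c^2)) / (Real.sqrt (1 + 2 * ρ x ^ (γ-1) / c^2))^2)
        (ρ x ^ (γ-1)) := by
      have e : (fun t : ℝ => 1 / Real.sqrt (1 + 2 * t / c ^ 2))
          = (fun y : ℝ => y⁻¹) ∘ (fun x : ℝ => Real.sqrt x) ∘ fun t : ℝ => 1 + 2 * t / c ^ 2 := by
        funext t
        simp [Function.comp_def]
      rw [e]
      exact h3.congr_deriv (by ring)
    rw [hΓ]
    exact φd.comp_hasFDerivAt (f := fun y => ρ y ^ (γ - 1)) x (hSd x)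
  have pdΓ : ∀ (α : Fin 4) x, pd α Γ x
      = (-(γ - 1) * ρ x ^ (γ - 1 - 1) * Γ x ^ 3 / c ^ 2) * pd α ρ x := by
    intro α x
    simp only [pd, (hΓD x).fderiv, ContinuousLinearMap.smul_apply, smul_eq_mul]
    rw [hΓ]
    have ha := (hsq x).ne'
    field_simp
  -- derivative of u
  have hud : ∀ (β : Fin 4) x, HasFDerivAt (u β)
      (Γ x • fderiv ℝ (U β) x + U β x • fderiv ℝ Γ x) x := by
    intro β x
    rw [hu]
    exact ((hΓD x).differentiableAt.hasFDerivAt).mul (hUd β x).hasFDerivAt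
  have pdu : ∀ (α β : Fin 4) x, pd α (u β) x
      = pd α Γ x * U β x + Γ x * pd α (U β) x := by
    intro α β x
    simp only [pd, (hud β x).fderiv, ContinuousLinearMap.add_apply,
      ContinuousLinearMap.smul_apply, smul_eq_mul]
    ring
  -- derivative of μ
  have hμd : ∀ x, HasFDerivAt μ
      (fderiv ℝ ρ x + ((γ + 1) * (γ * ρ x ^ (γ - 1) / γ) / c ^ 2) • fderiv ℝ ρ x) x := by
    intro x
    rw [hμ]
    exact (hρd x).hasFDerivAt.add
      (HasDerivAt.comp_hasFDerivAt x
        ((((Real.hasDerivAt_rpow_const (Or.inr (by linarith : (1:ℝ) ≤ γ))).div_const γ).const_mul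
          (γ + 1)).div_const (c ^ 2)) (hρd x).hasFDerivAt)
  have pdμ : ∀ (α : Fin 4) x, pd α μ x = (1 + (γ + 1) * ρ x ^ (γ - 1) / c ^ 2) * pd α ρ x := by
    intro α x
    simp only [pd, (hμd x).fderiv, ContinuousLinearMap.add_apply,
      ContinuousLinearMap.smul_apply, smul_eq_mul]
    field_simp
  -- derivative of p
  have hpd : ∀ x, HasFDerivAt p (((γ - 1) * (γ * ρ x ^ (γ - 1) / γ)) • fderiv ℝ ρ x) x := by
    intro x
    have hout : HasDerivAt (fun t : ℝ => (γ - 1) * (t ^ γ / γ))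
        ((γ - 1) * (γ * ρ x ^ (γ - 1) / γ)) (ρ x) :=
      ((Real.hasDerivAt_rpow_const (Or.inr (by linarith : (1:ℝ) ≤ γ))).div_const γ).const_mul (γ - 1)
    rw [hp]
    exact hout.comp_hasFDerivAt x (hρd x).hasFDerivAt
  have pdp : ∀ (α : Fin 4) x, pd α p x = (γ - 1) * ρ x ^ (γ - 1) * pd α ρ x := by
    intro α x
    simp only [pd, (hpd x).fderiv, ContinuousLinearMap.smul_apply, smul_eq_mul]
    field_simp
  -- rewriting of hmom
  have H1 : ∀ (β : Fin 4) x, minkc c β * (∑ α : Fin 4, U α x * pd α (U β) x)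
      + (γ - 1) * ρ x ^ (γ - 1 - 1) * pd β ρ x = 0 := by
    intro β x
    have h := hmom β x
    rw [pdρS] at h
    have e : ∀ α : Fin 4, U α x * pd α (fun y => minkc c β * U β y) x
        = minkc c β * (U α x * pd α (U β) x) := by
      intro α
      have hcm : pd α (fun y => minkc c β * U β y) x = minkc c β * pd α (U β) x := by
        simp only [pd, fderiv_const_mul (hUd β x) (minkc c β),
          ContinuousLinearMap.smul_apply, smul_eq_mul]
      rw [hcm]; ring
    rw [Finset.sum_congr rfl (fun α _ => e α), ← Finset.mul_sum] at h
    linarith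
  -- vanishing gradient at zeros of ρ
  have H4 : ∀ x, ρ x = 0 → ∀ (α : Fin 4), pd α ρ x = 0 := by
    intro x hx α
    have hmin : IsLocalMin ρ x := Filter.Eventually.of_forall fun y => hx.trans_le (hρ0 y)
    simp [pd, hmin.fderiv_eq_zero]
  -- the enthalpy
  have hM : ∀ x, μ x + p x / c ^ 2 = ρ x * (1 + 2 * ρ x ^ (γ - 1) / c ^ 2) := by
    intro x
    simp only [hμ, hp]
    rw [hrS x]
    field_simp
    ring
  have hm0 : ∀ β : Fin 4, minkc c β ≠ 0 := by
    intro β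
    simp only [minkc]
    split
    · exact neg_ne_zero.2 hc2.ne'
    · exact one_ne_zero
  have hmm' : ∀ β : Fin 4, minkc c β * minkcInv c β = 1 := by
    intro β
    simp only [minkc, minkcInv]
    split
    · field_simp
    · ring
  refine ⟨?_, ?_, ?_, ?_, ?_⟩
  · -- momentum equation
    intro β x
    have e1 : ∀ α : Fin 4, u α x * pd α (u β) x
        = (Γ x * (-(γ - 1) * ρ x ^ (γ - 1 - 1) * Γ x ^ 3 / c ^ 2) * U β x) * (U α x * pd α ρ x)
          + Γ x ^ 2 * (U α x * pd α (U β) x) := by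
      intro α; rw [pdu α β x, pdΓ α x]; simp only [hu]; ring
    have e2 : ∀ α : Fin 4, ((if α = β then minkcInv c α else 0) + u α x * u β x / c ^ 2)
          * pd α p x
        = (if α = β then minkcInv c α * ((γ - 1) * ρ x ^ (γ - 1) * pd α ρ x) else 0)
          + (Γ x ^ 2 * U β x * (γ - 1) * ρ x ^ (γ - 1) / c ^ 2) * (U α x * pd α ρ x) := by
      intro α; rw [pdp α x]; simp only [hu]; split <;> ring
    rw [Finset.sum_congr rfl fun α _ => e1 α, Finset.sum_add_distrib, ← Finset.mul_sum,
      ← Finset.mul_sum, Finset.sum_congr rfl fun α _ => e2 α, Finset.sum_add_distrib,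
      Finset.sum_ite_eq' Finset.univ β _, ← Finset.mul_sum]
    simp only [Finset.mem_univ, ite_true]
    set A := ∑ α : Fin 4, U α x * pd α ρ x with hAdef
    set K := ∑ α : Fin 4, U α x * pd α (U β) x with hKdef
    rcases eq_or_lt_of_le (hρ0 x) with h0 | h0
    · have hd : ∀ α : Fin 4, pd α ρ x = 0 := H4 x h0.symm
      have hs : ρ x ^ (γ - 1) = 0 := by
        rw [← h0]; exact Real.zero_rpow (by linarith : γ - 1 ≠ 0)
      have hA0 : A = 0 := by
        rw [hAdef]; exact Finset.sum_eq_zero fun α _ => by rw [hd α, mul_zero]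
      have hK : K = 0 := by
        have h := H1 β x
        rw [hd β, mul_zero, add_zero] at h
        exact (mul_eq_zero.mp h).resolve_left (hm0 β)
      rw [hA0, hK, hd β]
      simp
    · have hM0 : μ x + p x / c ^ 2 ≠ 0 := by
        rw [hM x]; exact (mul_pos h0 (hw x)).ne'
      have div_aux : ∀ X Y M : ℝ, M ≠ 0 → Y = -X * M → X + Y / M = 0 := by
        intro X Y M hMne hY
        rw [hY]
        field_simp
        ring
      refine div_aux _ _ _ hM0 ?_
      have key : minkcInv c β * ((γ - 1) * ρ x ^ (γ - 1) * pd β ρ x)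
            + (Γ x ^ 2 * U β x * (γ - 1) * ρ x ^ (γ - 1) / c ^ 2) * A
          = -((Γ x * (-(γ - 1) * ρ x ^ (γ - 1 - 1) * Γ x ^ 3 / c ^ 2) * U β x) * A
              + Γ x ^ 2 * K) * (μ x + p x / c ^ 2) := by
        rw [hM x]
        linear_combination (ρ x * minkcInv c β) * H1 β x
          + (-(ρ x) * K) * hmm' β
          + (ρ x * K - (γ - 1) * ρ x ^ (γ - 1) * Γ x ^ 2 * U β x * A / c ^ 2) * hG2 x
          + ((γ - 1) * Γ x ^ 4 * U β x * A * (1 + 2 * ρ x ^ (γ - 1) / c ^ 2) / c ^ 2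
              + (γ - 1) * minkcInv c β * pd β ρ x) * hrT x
      rw [hM x] at key ⊢
      linear_combination key
  · -- continuity equation
    intro x
    have e1 : ∀ α : Fin 4, u α x * pd α μ x
        = (Γ x * (1 + (γ + 1) * ρ x ^ (γ - 1) / c ^ 2)) * (U α x * pd α ρ x) := by
      intro α; rw [pdμ α x]; simp only [hu]; ring
    have e2 : ∀ α : Fin 4, pd α (u α) x
        = (-(γ - 1) * ρ x ^ (γ - 1 - 1) * Γ x ^ 3 / c ^ 2) * (U α x * pd α ρ x)
          + Γ x * pd α (U α) x := by
      intro α; rw [pdu α α x, pdΓ α x]; ring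
    rw [Finset.sum_congr rfl fun α _ => e1 α, ← Finset.mul_sum,
      Finset.sum_congr rfl fun α _ => e2 α, Finset.sum_add_distrib,
      ← Finset.mul_sum, ← Finset.mul_sum, hM x]
    set A := ∑ α : Fin 4, U α x * pd α ρ x with hAdef
    set D := ∑ α : Fin 4, pd α (U α) x with hDdef
    have hA : A + ρ x * D = 0 := hcont x
    linear_combination (Γ x * (1 + 2 * ρ x ^ (γ - 1) / c ^ 2)) * hA
      + (-(γ - 1) * ρ x ^ (γ - 1) * Γ x * A / c ^ 2) * hG2 x
      + ((γ - 1) * Γ x ^ 3 * A * (1 + 2 * ρ x ^ (γ - 1) / c ^ 2) / c ^ 2) * hrT x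
  · -- normalization
    intro x
    have e : ∀ α : Fin 4, minkc c α * u α x * u α x
        = Γ x ^ 2 * (minkc c α * U α x * U α x) := by
      intro α; simp only [hu]; ring
    rw [Finset.sum_congr rfl fun α _ => e α, ← Finset.mul_sum, hnorm]
    linear_combination (-1 : ℝ) * hG2' x
  · -- Uρ = u (μ + p/c²) Γ
    intro α x
    rw [hM x]
    simp only [hu]
    linear_combination (-(U α x) * ρ x) * hG2 x
  · -- ρ = (μ + p/c²) Γ²
    intro x
    rw [hM x]
    linear_combination (-(ρ x)) * hG2 x
end
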